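/- arXiv:math/0206072 — 2 statements merged into one kernel-verified Lean document; each statement's English description precedes it below -/
import Mathlib

section
/- For all rational numbers r and s, r² + 15·s² ≠ 2. -/
lemma zmod5_aux (x y : ZMod 5) (h : x ^ 2 = 2 * y ^ 2) : x = 0 ∧ y = 0 := by
  revert x y; decide

lemma zmod5_aux2 (y : ZMod 5) (h : 3 * y ^ 2 = 0) : y = 0 := by
  revert y; decide

lemma descent (n : ℕ) : ∀ a b c : ℤ, c.natAbs ≤ n → a ^ 2 + 15 * b ^ 2 = 2 * c ^ 2 → c = 0 := by
  induction n with
  | zero =>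
    intro a b c h _
    omega
  | succ n ih =>
    intro a b c hle heq
    by_cases hc : c = 0
    · exact hc
    · -- reduce mod 5
      have h5 : ((a : ZMod 5)) ^ 2 = 2 * ((c : ZMod 5)) ^ 2 := by
        have := congrArg (Int.cast : ℤ → ZMod 5) heq
        push_cast at this
        have h15 : (15 : ZMod 5) = 0 := by decide
        linear_combination this - ((b : ZMod 5)) ^ 2 * h15
      obtain ⟨ha5, hc5⟩ := zmod5_aux _ _ h5
      have hda : (5 : ℤ) ∣ a := by
        exact_mod_cast (ZMod.intCast_zmod_eq_zero_iff_dvd a 5).mp ha5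
      have hdc : (5 : ℤ) ∣ c := by
        exact_mod_cast (ZMod.intCast_zmod_eq_zero_iff_dvd c 5).mp hc5
      obtain ⟨a', rfl⟩ := hda
      obtain ⟨c', rfl⟩ := hdc
      have heq2 : 5 * a' ^ 2 + 3 * b ^ 2 = 10 * c' ^ 2 := by linarith [heq, sq_nonneg b]
      have hb5 : (3 : ZMod 5) * ((b : ZMod 5)) ^ 2 = 0 := by
        have := congrArg (Int.cast : ℤ → ZMod 5) heq2
        push_cast at this
        have h10 : (10 : ZMod 5) = 0 := by decide
        have h5' : (5 : ZMod 5) = 0 := by decide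
        linear_combination this + ((c' : ZMod 5)) ^ 2 * h10 - ((a' : ZMod 5)) ^ 2 * h5'
      have hdb : (5 : ℤ) ∣ b := by
        exact_mod_cast (ZMod.intCast_zmod_eq_zero_iff_dvd b 5).mp (zmod5_aux2 _ hb5)
      obtain ⟨b', rfl⟩ := hdb
      have heq3 : a' ^ 2 + 15 * b' ^ 2 = 2 * c' ^ 2 := by linarith [heq2]
      have hna : (5 * c').natAbs = 5 * c'.natAbs := by
        simp [Int.natAbs_mul]
      have hle' : c'.natAbs ≤ n := by omega
      have := ih a' b' c' hle' heq3
      simp [this] at hc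

/-- `2` is not a norm from `ℚ(√−15)`: for rationals `r, s` one has `r² + 15s² ≠ 2`. -/
theorem two_not_a_norm (r s : ℚ) : r ^ 2 + 15 * s ^ 2 ≠ 2 := by
  intro h
  set a : ℤ := r.num * s.den with ha
  set b : ℤ := s.num * r.den with hb
  set d : ℤ := (r.den : ℤ) * (s.den : ℤ) with hd
  have hrden : ((r.den : ℚ)) ≠ 0 := by exact_mod_cast r.den_ne_zero
  have hsden : ((s.den : ℚ)) ≠ 0 := by exact_mod_cast s.den_ne_zero
  have hr := Rat.num_div_den r
  rw [div_eq_iff hrden] at hr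
  have hs := Rat.num_div_den s
  rw [div_eq_iff hsden] at hs
  have key : ((a : ℚ)) ^ 2 + 15 * ((b : ℚ)) ^ 2 = 2 * ((d : ℚ)) ^ 2 := by
    rw [ha, hb, hd]
    push_cast
    rw [hr, hs]
    linear_combination ((r.den : ℚ) * (s.den : ℚ)) ^ 2 * h
  have keyZ : a ^ 2 + 15 * b ^ 2 = 2 * d ^ 2 := by exact_mod_cast key
  have hd0 : d = 0 := descent d.natAbs a b d le_rfl keyZ
  have : (r.den : ℤ) * (s.den : ℤ) ≠ 0 := by
    positivity
  exact this (hd ▸ hd0)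
end

section
/- Let j and k be natural numbers, let q be an integer not divisible by 5, and let ε ∈ {1, −1}. Let H be an additive subgroup of (ℤ/5) × (ℤ/5^(2k+1)) such that for every element (x, y) of H, the integer 5^(2k+1) divides 2·x̄²·5^(2k) + ε·2·3^(2j+1)·q²·ȳ², where x̄ and ȳ denote the integer representatives (values in {0,…,4} and {0,…,5^(2k+1)−1}) of x and y. Then the cardinality of H is at most 5^k. -/
lemma aux32 : ((3 : ZMod 5)) ^ 2 = -1 := by decide
lemma auxneg4 : (1 * 4 * -1 * 1 : ZMod 5) = 1 := by decide

lemma key5 : ∀ u a b : ZMod 5, u ^ 2 = 1 → 2 * a ^ 2 + u * b ^ 2 = 0 → a = 0 ∧ b = 0 := by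
  decide

lemma elem5 (j k : ℕ) (q : ℤ) (hq : ¬ (5 : ℤ) ∣ q) (ε : ℤ) (hε : ε = 1 ∨ ε = -1)
    (x y : ℤ)
    (h : (5 : ℤ) ^ (2 * k + 1) ∣
      2 * x ^ 2 * 5 ^ (2 * k) + ε * 2 * 3 ^ (2 * j + 1) * q ^ 2 * y ^ 2) :
    (5 : ℤ) ∣ x ∧ (5 : ℤ) ^ (k + 1) ∣ y := by
  haveI : Fact (Nat.Prime 5) := ⟨by norm_num⟩
  have hp : Prime (5 : ℤ) := by norm_num
  set c : ℤ := ε * 2 * 3 ^ (2 * j + 1) * q ^ 2 with hc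
  -- 5 ∤ c
  have hc5 : ¬ (5 : ℤ) ∣ c := by
    intro hdvd
    rw [hc] at hdvd
    rcases (hp.dvd_mul).mp hdvd with h1 | h2
    · rcases (hp.dvd_mul).mp h1 with h3 | h4
      · rcases (hp.dvd_mul).mp h3 with h5 | h6
        · rcases hε with rfl | rfl <;> norm_num at h5
        · norm_num at h6
      · have := hp.dvd_of_dvd_pow h4; norm_num at this
    · exact hq (hp.dvd_of_dvd_pow h2)
  -- step 1: 5^k ∣ y
  have h2k : (5 : ℤ) ^ (2 * k) ∣ c * y ^ 2 := by
    have hA : (5 : ℤ) ^ (2 * k) ∣ 2 * x ^ 2 * 5 ^ (2 * k) := dvd_mul_left _ _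
    have hS : (5 : ℤ) ^ (2 * k) ∣ 2 * x ^ 2 * 5 ^ (2 * k) + c * y ^ 2 :=
      dvd_trans (pow_dvd_pow 5 (by omega)) h
    simpa using (dvd_sub hS hA)
  have hcop : IsCoprime ((5 : ℤ) ^ (2 * k)) c :=
    IsCoprime.pow_left ((Prime.coprime_iff_not_dvd hp).mpr hc5)
  have hy2 : (5 : ℤ) ^ (2 * k) ∣ y ^ 2 := hcop.dvd_of_dvd_mul_left h2k
  have hyk : (5 : ℤ) ^ k ∣ y := by
    have : ((5 : ℤ) ^ k) ^ 2 ∣ y ^ 2 := by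
      rw [← pow_mul]; simpa [mul_comm] using hy2
    exact (Int.pow_dvd_pow_iff two_ne_zero).mp this
  obtain ⟨y', rfl⟩ := hyk
  -- step 2: 5 ∣ 2x² + c y'²
  have h5 : (5 : ℤ) ∣ 2 * x ^ 2 + c * y' ^ 2 := by
    have heq : 2 * x ^ 2 * 5 ^ (2 * k) + c * ((5 : ℤ) ^ k * y') ^ 2
        = 5 ^ (2 * k) * (2 * x ^ 2 + c * y' ^ 2) := by ring
    rw [heq] at h
    have hne : ((5 : ℤ) ^ (2 * k)) ≠ 0 := by positivity
    have h' : (5 : ℤ) ^ (2 * k) * 5 ∣ 5 ^ (2 * k) * (2 * x ^ 2 + c * y' ^ 2) := by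
      rw [← pow_succ]; exact h
    exact (mul_dvd_mul_iff_left hne).mp h'
  -- step 3: mod 5
  have hq5 : (q : ZMod 5) ≠ 0 := by
    rw [Ne, ZMod.intCast_zmod_eq_zero_iff_dvd]; exact_mod_cast hq
  have hq4 : (q : ZMod 5) ^ 4 = 1 := by
    have := ZMod.pow_card_sub_one_eq_one hq5
    simpa using this
  have hε2 : ((ε : ZMod 5)) ^ 2 = 1 := by
    rcases hε with rfl | rfl <;> norm_num
  have hu : ((c : ZMod 5)) ^ 2 = 1 := by
    rw [hc]
    push_cast
    have hexp : ((ε : ZMod 5) * 2 * (3 : ZMod 5) ^ (2 * j + 1) * (q : ZMod 5) ^ 2) ^ 2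
        = (ε : ZMod 5) ^ 2 * 4 * (((3 : ZMod 5) ^ 2) ^ (2 * j + 1)) * (q : ZMod 5) ^ 4 := by
      rw [← pow_mul, mul_comm 2 (2 * j + 1), pow_mul]
      ring
    rw [hexp, hε2, hq4, aux32, Odd.neg_one_pow ⟨j, by ring⟩]
    exact auxneg4
  have hmod : (2 : ZMod 5) * ((x : ZMod 5)) ^ 2 + (c : ZMod 5) * ((y' : ZMod 5)) ^ 2 = 0 := by
    have h0 := (ZMod.intCast_zmod_eq_zero_iff_dvd _ 5).mpr h5
    push_cast at h0
    linear_combination h0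
  obtain ⟨hx0, hy0⟩ := key5 _ _ _ hu hmod
  constructor
  · exact (ZMod.intCast_zmod_eq_zero_iff_dvd x 5).mp hx0
  · have : (5 : ℤ) ∣ y' := (ZMod.intCast_zmod_eq_zero_iff_dvd y' 5).mp hy0
    obtain ⟨z, rfl⟩ := this
    exact ⟨z, by ring⟩

/-- Linking-form conclusion of Theorem 2: a subgroup of `ℤ₅ ⊕ ℤ_{5^{2k+1}}` on which the
self-linking `2x²/5 + ε·2·3^{2j+1}q²y²/5^{2k+1}` vanishes in `ℚ/ℤ` has order at most `5^k`. -/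
theorem metabolizer_small (j k : ℕ) (q : ℤ) (hq : ¬ (5 : ℤ) ∣ q) (ε : ℤ)
    (hε : ε = 1 ∨ ε = -1) (H : AddSubgroup (ZMod 5 × ZMod (5 ^ (2 * k + 1))))
    (hH : ∀ p ∈ H, (5 : ℤ) ^ (2 * k + 1) ∣
      2 * (p.1.val : ℤ) ^ 2 * 5 ^ (2 * k) +
        ε * 2 * 3 ^ (2 * j + 1) * q ^ 2 * (p.2.val : ℤ) ^ 2) :
    Nat.card H ≤ 5 ^ k := by
  have hmain : ∀ p ∈ H, p.1 = 0 ∧ (5 : ℕ) ^ (k + 1) ∣ p.2.val := by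
    intro p hp
    obtain ⟨hx, hy⟩ := elem5 j k q hq ε hε _ _ (hH p hp)
    constructor
    · have hlt : p.1.val < 5 := p.1.val_lt
      have hv : p.1.val = 0 := by
        rcases hx with ⟨m, hm⟩
        omega
      exact (ZMod.val_eq_zero p.1).mp hv
    · have h' : ((5 ^ (k + 1) : ℕ) : ℤ) ∣ ((p.2.val : ℕ) : ℤ) := by push_cast; exact hy
      exact_mod_cast h'
  have hpos : 0 < 5 ^ (k + 1) := by positivity
  have hlt5 : ∀ p : H, (p.1 : ZMod 5 × ZMod (5 ^ (2 * k + 1))).2.val / 5 ^ (k + 1) < 5 ^ k := by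
    intro p
    have hv : (p.1 : ZMod 5 × ZMod (5 ^ (2 * k + 1))).2.val < 5 ^ (2 * k + 1) := ZMod.val_lt _
    rw [Nat.div_lt_iff_lt_mul hpos]
    calc _ < 5 ^ (2 * k + 1) := hv
      _ = 5 ^ k * 5 ^ (k + 1) := by rw [← pow_add]; ring_nf
  let f : H → Fin (5 ^ k) := fun p => ⟨_, hlt5 p⟩
  have hf : Function.Injective f := by
    intro p1 p2 hfe
    have h1 := hmain p1.1 p1.2
    have h2 := hmain p2.1 p2.2
    have he : p1.1.2.val / 5 ^ (k + 1) = p2.1.2.val / 5 ^ (k + 1) :=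
      congrArg Fin.val hfe
    have hval : p1.1.2.val = p2.1.2.val := by
      obtain ⟨m1, hm1⟩ := h1.2
      obtain ⟨m2, hm2⟩ := h2.2
      rw [hm1, hm2] at he ⊢
      rw [Nat.mul_div_cancel_left _ hpos, Nat.mul_div_cancel_left _ hpos] at he
      rw [he]
    have h2eq : p1.1.2 = p2.1.2 := ZMod.val_injective _ hval
    have h1eq : p1.1.1 = p2.1.1 := by rw [h1.1, h2.1]
    exact Subtype.ext (Prod.ext h1eq h2eq)
  calc Nat.card H ≤ Nat.card (Fin (5 ^ k)) := Nat.card_le_card_of_injective f hf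
    _ = 5 ^ k := by simp
end
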